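/- Let X and Y be Banach spaces, one of which has the approximation property. If (xₙ) ⊂ X converges weakly to x, (yₙ) ⊂ Y converges weakly to y, and (xₙ ⊗ yₙ) converges weakly in X ⊗̂_π Y, then (xₙ ⊗ yₙ) converges weakly to x ⊗ y. -/

import Mathlib

open Filter Topology NormedSpace

noncomputable section

variable (X Y : Type*) [NormedAddCommGroup X] [NormedSpace ℝ X] [CompleteSpace X]
  [NormedAddCommGroup Y] [NormedSpace ℝ Y] [CompleteSpace Y]

/-- The space `B(X × Y)` of bounded bilinear forms on `X × Y`. -/
abbrev Bil := X →L[ℝ] Y →L[ℝ] ℝ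

instance : NormedAddCommGroup (StrongDual ℝ (Bil X Y)) :=
  @ContinuousLinearMap.toNormedAddCommGroup ℝ ℝ (Bil X Y) ℝ _ _ _ _ _ _ (RingHom.id ℝ) _

instance : NormedSpace ℝ (StrongDual ℝ (Bil X Y)) :=
  ContinuousLinearMap.toNormedSpace (E := Bil X Y) (F := ℝ) (σ₁₂ := RingHom.id ℝ)

/-- The elementary tensor `x ⊗ y`, viewed as a functional on bounded bilinear
forms: `⟨x ⊗ y, B⟩ = B x y`. -/
def elemTensor (x : X) (y : Y) : StrongDual ℝ (Bil X Y) :=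
  (ContinuousLinearMap.apply ℝ ℝ y).comp (ContinuousLinearMap.apply ℝ (Y →L[ℝ] ℝ) x)

/-- The projective tensor product `X ⊗̂_π Y`: the closed linear span of the elementary
tensors inside `B(X × Y)*` (the induced dual norm is the projective norm, and the weak
topology of `X ⊗̂_π Y` is the topology `σ(X ⊗̂_π Y, B(X × Y))` inherited from the
weak-* topology of `B(X × Y)*`). -/
def ptp : Submodule ℝ (StrongDual ℝ (Bil X Y)) :=
  (Submodule.span ℝ {u | ∃ x y, u = elemTensor X Y x y}).topologicalClosure

/-- The approximation property: for every `ε > 0` and every compact set `K` there is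
a finite-rank operator `T` with `‖T x - x‖ ≤ ε` on `K`. -/
def HasAP (Z : Type*) [NormedAddCommGroup Z] [NormedSpace ℝ Z] : Prop :=
  ∀ ε : ℝ, 0 < ε → ∀ K : Set Z, IsCompact K →
    ∃ T : Z →L[ℝ] Z, FiniteDimensional ℝ (LinearMap.range (T : Z →ₗ[ℝ] Z)) ∧
      ∀ x ∈ K, ‖T x - x‖ ≤ ε

/-!
Put `w = u - x₀ ⊗ y₀`, where `u` is the weak limit of `xₙ ⊗ yₙ`. Testing against rank-one
forms gives `w (f ⊗ g) = lim f (xₙ) g (yₙ) - f x₀ g y₀ = 0`. By Hahn–Banach the projective norm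
of a finite sum of elementary tensors is its norm in `B(X × Y)*`, so every `w ∈ X ⊗̂_π Y` is a
series `∑ aₙ ⊗ bₙ` with `∑ ‖aₙ‖ ‖bₙ‖ < ∞`, which can be rescaled so that `aₙ → 0` and
`∑ ‖bₙ‖ < ∞`. If `X` has the approximation property, pick a finite-rank `T` uniformly close to
the identity on the compact set `{0} ∪ {aₙ}`: `B (T ·) ·` is a sum of rank-one forms, so
`w B = ∑ B (aₙ - T aₙ) bₙ` is arbitrarily small. The case of `Y` is symmetric.
-/

open scoped TensorProduct

namespace TensorProduct

variable {𝕜 E F : Type*} [SeminormedAddCommGroup E] [SeminormedAddCommGroup F]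

def projectiveCost (L : List (E × F)) : ℝ := (L.map fun p => ‖p.1‖ * ‖p.2‖).sum

lemma projectiveCost_nonneg (L : List (E × F)) : 0 ≤ projectiveCost L :=
  List.sum_nonneg (by simp only [List.mem_map]; rintro _ ⟨p, -, rfl⟩; positivity)

lemma projectiveCost_smul [NormedField 𝕜] [NormedSpace 𝕜 E] (c : 𝕜) (L : List (E × F)) :
    projectiveCost (L.map fun p => (c • p.1, p.2)) = ‖c‖ * projectiveCost L := by
  simp [projectiveCost, Function.comp_def, norm_smul, mul_assoc, List.sum_map_mul_left]

variable [NormedField 𝕜] [NormedSpace 𝕜 E] [NormedSpace 𝕜 F]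

variable (𝕜) in
def tmulSum (L : List (E × F)) : E ⊗[𝕜] F := (L.map fun p => p.1 ⊗ₜ[𝕜] p.2).sum

lemma tmulSum_smul (c : 𝕜) (L : List (E × F)) :
    tmulSum 𝕜 (L.map fun p => (c • p.1, p.2)) = c • tmulSum 𝕜 L := by
  simp [tmulSum, List.smul_sum, Function.comp_def, smul_tmul']

lemma exists_tmulSum_eq (t : E ⊗[𝕜] F) : ∃ L : List (E × F), tmulSum 𝕜 L = t := by
  induction t with
  | zero => exact ⟨[], rfl⟩
  | tmul x y => exact ⟨[(x, y)], by simp [tmulSum]⟩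
  | add t t' ht ht' =>
    obtain ⟨L, rfl⟩ := ht
    obtain ⟨L', rfl⟩ := ht'
    exact ⟨L ++ L', by simp [tmulSum]⟩

instance (t : E ⊗[𝕜] F) : Nonempty {L : List (E × F) // tmulSum 𝕜 L = t} :=
  nonempty_subtype.2 (exists_tmulSum_eq t)

lemma bddBelow_projectiveCost (t : E ⊗[𝕜] F) :
    BddBelow (Set.range fun L : {L : List (E × F) // tmulSum 𝕜 L = t} => projectiveCost L.1) :=
  ⟨0, by rintro _ ⟨L, rfl⟩; exact projectiveCost_nonneg _⟩

variable (𝕜 E F) in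
def projectiveSeminorm : Seminorm 𝕜 (E ⊗[𝕜] F) :=
  .ofSMulLE (fun t => ⨅ L : {L : List (E × F) // tmulSum 𝕜 L = t}, projectiveCost L.1)
    (le_antisymm (ciInf_le (bddBelow_projectiveCost 0) ⟨[], rfl⟩)
      (le_ciInf fun L => projectiveCost_nonneg L.1))
    (fun t t' => le_ciInf_add_ciInf fun L L' => ciInf_le_of_le (bddBelow_projectiveCost _)
      ⟨L.1 ++ L'.1, by simp [tmulSum, ← L.2, ← L'.2]⟩ (by simp [projectiveCost]))
    (fun c t => by
      rw [Real.mul_iInf_of_nonneg (norm_nonneg c)]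
      exact le_ciInf fun L => ciInf_le_of_le (bddBelow_projectiveCost _)
        ⟨_, by rw [tmulSum_smul, L.2]⟩ (projectiveCost_smul c L.1).le)

lemma projectiveSeminorm_le_projectiveCost {L : List (E × F)} {t : E ⊗[𝕜] F}
    (h : tmulSum 𝕜 L = t) :
    projectiveSeminorm 𝕜 E F t ≤ projectiveCost L :=
  ciInf_le (bddBelow_projectiveCost t) ⟨L, h⟩

lemma exists_projectiveCost_lt {t : E ⊗[𝕜] F} {r : ℝ} (h : projectiveSeminorm 𝕜 E F t < r) :
    ∃ L : List (E × F), tmulSum 𝕜 L = t ∧ projectiveCost L < r := by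
  obtain ⟨L, hL⟩ := exists_lt_of_ciInf_lt h
  exact ⟨L.1, L.2, hL⟩

lemma projectiveSeminorm_tmul_le (x : E) (y : F) :
    projectiveSeminorm 𝕜 E F (x ⊗ₜ y) ≤ ‖x‖ * ‖y‖ := by
  simpa [projectiveCost] using
    projectiveSeminorm_le_projectiveCost (L := [(x, y)]) (by simp [tmulSum])

end TensorProduct

theorem Seminorm.exists_dual_vector {E : Type*} [AddCommGroup E] [Module ℝ E] (p : Seminorm ℝ E)
    (x : E) :
    ∃ g : Module.Dual ℝ E, g x = p x ∧ ∀ y, |g y| ≤ p y := by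
  rcases eq_or_ne x 0 with rfl | hx
  · exact ⟨0, by simp, fun y => by simp⟩
  let f : E →ₗ.[ℝ] ℝ := LinearPMap.mkSpanSingleton x (p x) hx
  have hf : ∀ y : f.domain, f y ≤ p y := by
    rintro ⟨y, hy⟩
    obtain ⟨c, rfl⟩ := Submodule.mem_span_singleton.1 hy
    rw [LinearPMap.mkSpanSingleton'_apply, smul_eq_mul, map_smul_eq_mul, Real.norm_eq_abs]
    exact mul_le_mul_of_nonneg_right (le_abs_self c) (apply_nonneg p x)
  obtain ⟨g, hgf, hg⟩ := Module.Dual.exists_extension_of_le_seminorm_real f.domain f.toFun hf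
  refine ⟨g, ?_, hg⟩
  rw [← f.domain.coe_mk x (Submodule.mem_span_singleton_self _), hgf]
  exact LinearPMap.mkSpanSingleton'_apply_self _ _ _ _

section

variable {E F : Type*} [NormedAddCommGroup E] [NormedSpace ℝ E] [NormedAddCommGroup F]
  [NormedSpace ℝ F]

lemma exists_pos_tendsto_zero_summable_div {t : ℕ → ℝ} (ht : ∀ n, 0 ≤ t n) (hs : Summable t) :
    ∃ μ : ℕ → ℝ, (∀ n, 0 < μ n) ∧ Tendsto μ atTop (𝓝 0) ∧ Summable fun n => t n / μ n := by
  -- tails of the series, padded by `(1 / 2) ^ n` to keep them positive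
  set τ : ℕ → ℝ := fun n => ∑' m, t (m + n) + (1 / 2) ^ n
  have hτ_pos : ∀ n, 0 < τ n := fun n => by
    have : 0 ≤ ∑' m, t (m + n) := tsum_nonneg fun m => ht (m + n)
    positivity
  have hτ_lim : Tendsto τ atTop (𝓝 0) := by
    have := (tendsto_sum_nat_add t).add
      (tendsto_pow_atTop_nhds_zero_of_lt_one (by norm_num : (0 : ℝ) ≤ 1 / 2) (by norm_num))
    rwa [add_zero] at this
  have hτ_step : ∀ n, t n ≤ τ n - τ (n + 1) := fun n => by
    have : ∑' m, t (m + n) = t n + ∑' m, t (m + (n + 1)) := by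
      simpa [add_assoc, add_comm 1 n] using ((summable_nat_add_iff n).2 hs).tsum_eq_zero_add
    simp only [τ, this, pow_succ]
    linarith [pow_pos (by norm_num : (0 : ℝ) < 1 / 2) n]
  set s : ℕ → ℝ := fun n => √(τ n)
  have hs_pos : ∀ n, 0 < s n := fun n => Real.sqrt_pos.2 (hτ_pos n)
  have hs_lim : Tendsto s atTop (𝓝 0) := by
    have := (Real.continuous_sqrt.tendsto 0).comp hτ_lim
    rwa [Real.sqrt_zero] at this
  refine ⟨fun n => s n + s (n + 1), fun n => add_pos (hs_pos n) (hs_pos _),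
    by simpa using hs_lim.add (hs_lim.comp (tendsto_add_atTop_nat 1)), ?_⟩
  -- `t n ≤ τ n - τ (n + 1) = (s n - s (n + 1)) (s n + s (n + 1))` makes the series telescope.
  have hle : ∀ n, t n / (s n + s (n + 1)) ≤ s n - s (n + 1) := fun n => by
    rw [div_le_iff₀ (add_pos (hs_pos n) (hs_pos _))]
    nlinarith [hτ_step n, Real.sq_sqrt (hτ_pos n).le, Real.sq_sqrt (hτ_pos (n + 1)).le]
  refine summable_of_sum_range_le (c := s 0)
    (fun n => div_nonneg (ht n) (add_pos (hs_pos n) (hs_pos _)).le) fun N => ?_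
  calc ∑ n ∈ Finset.range N, t n / (s n + s (n + 1))
        ≤ ∑ n ∈ Finset.range N, (s n - s (n + 1)) := Finset.sum_le_sum fun n _ => hle n
    _ = s 0 - s N := Finset.sum_range_sub' s N
    _ ≤ s 0 := sub_le_self _ (hs_pos N).le

lemma exists_rescaling {a : ℕ → E} {b : ℕ → F} (hab : Summable fun n => ‖a n‖ * ‖b n‖) :
    ∃ (a' : ℕ → E) (b' : ℕ → F), Tendsto a' atTop (𝓝 0) ∧ Summable (fun n => ‖b' n‖) ∧
      ∀ (Φ : E →L[ℝ] F →L[ℝ] ℝ) n, Φ (a' n) (b' n) = Φ (a n) (b n) := by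
  obtain ⟨μ, hμ_pos, hμ_lim, hμ_sum⟩ :=
    exists_pos_tendsto_zero_summable_div (fun n => by positivity) hab
  refine ⟨fun n => (μ n / ‖a n‖) • a n, fun n => (‖a n‖ / μ n) • b n, ?_, ?_, fun Φ n => ?_⟩
  · refine squeeze_zero_norm (fun n => ?_) hμ_lim
    rcases eq_or_ne (a n) 0 with h | h
    · simpa [h] using (hμ_pos n).le
    · rw [norm_smul, Real.norm_of_nonneg (div_nonneg (hμ_pos n).le (norm_nonneg _)),
        div_mul_cancel₀ _ (norm_ne_zero_iff.2 h)]
  · refine hμ_sum.congr fun n => ?_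
    rw [norm_smul, Real.norm_of_nonneg (div_nonneg (norm_nonneg _) (hμ_pos n).le)]
    ring
  · rcases eq_or_ne (a n) 0 with h | h
    · simp [h]
    · have := (hμ_pos n).ne'
      have := norm_ne_zero_iff.2 h
      simp only [map_smul, smul_apply, smul_eq_mul]
      field_simp

lemma ContinuousLinearMap.exists_eq_sum_smul_of_finiteDimensional_range (T : E →L[ℝ] F)
    [FiniteDimensional ℝ (LinearMap.range (T : E →ₗ[ℝ] F))] :
    ∃ (m : ℕ) (f : Fin m → StrongDual ℝ E) (e : Fin m → F), ∀ z, T z = ∑ j, f j z • e j := by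
  set R := LinearMap.range (T : E →ₗ[ℝ] F)
  let β := Module.finBasis ℝ R
  let S : E →L[ℝ] R := T.codRestrict R fun z => LinearMap.mem_range_self _ z
  refine ⟨Module.finrank ℝ R, fun j => (β.coord j).toContinuousLinearMap.comp S, fun j => β j,
    fun z => ?_⟩
  change (S z : F) = _
  conv_lhs => rw [← β.sum_repr (S z)]
  simp only [Submodule.coe_sum, Submodule.coe_smul]
  rfl

lemma summable_apply_of_norm_le {ι : Type*} {a : ι → E} {b : ι → F} {M : ℝ}
    (ha : ∀ i, ‖a i‖ ≤ M) (hb : Summable fun i => ‖b i‖) (Φ : E →L[ℝ] F →L[ℝ] ℝ) :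
    Summable fun i => Φ (a i) (b i) :=
  .of_norm_bounded (hb.mul_left (‖Φ‖ * M)) fun i => (Φ.le_opNorm₂ _ _).trans <|
    mul_le_mul_of_nonneg_right (mul_le_mul_of_nonneg_left (ha i) (norm_nonneg Φ)) (norm_nonneg _)

lemma tsum_apply_eq_zero_of_hasAP_of_tendsto (hE : HasAP E) {a : ℕ → E} {b : ℕ → F}
    (ha : Tendsto a atTop (𝓝 0)) (hb : Summable fun n => ‖b n‖)
    (h : ∀ (f : StrongDual ℝ E) (g : StrongDual ℝ F), ∑' n, f (a n) * g (b n) = 0)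
    (Φ : E →L[ℝ] F →L[ℝ] ℝ) : ∑' n, Φ (a n) (b n) = 0 := by
  obtain ⟨M, hM⟩ : ∃ M, ∀ n, ‖a n‖ ≤ M := by
    obtain ⟨M, hM⟩ := ha.norm.bddAbove_range
    exact ⟨M, fun n => hM ⟨n, rfl⟩⟩
  set C := ‖Φ‖ * ∑' n, ‖b n‖
  have key : ∀ δ > 0, |∑' n, Φ (a n) (b n)| ≤ δ * C := by
    intro δ hδ
    obtain ⟨T, hT_fin, hT⟩ := hE δ hδ _ ha.isCompact_insert_range
    have hTa : ∀ n, ‖T (a n) - a n‖ ≤ δ := fun n => hT _ (Set.mem_insert_of_mem _ ⟨n, rfl⟩)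
    obtain ⟨m, f, e, hTe⟩ := T.exists_eq_sum_smul_of_finiteDimensional_range
    have hΦT : ∑' n, Φ (T (a n)) (b n) = 0 := by
      simp only [hTe, map_sum, map_smul, sum_apply, smul_apply, smul_eq_mul]
      rw [Summable.tsum_finsetSum fun j _ => ?_]
      · exact Finset.sum_eq_zero fun j _ => h (f j) (Φ (e j))
      · simpa using summable_apply_of_norm_le hM hb ((f j).smulRight (Φ (e j)))
    have hTa_le : ∀ n, ‖T (a n)‖ ≤ M + δ := fun n =>
      (norm_le_insert' _ (a n)).trans (add_le_add (hM n) (hTa n))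
    have hbound : ∀ n, ‖Φ (a n - T (a n)) (b n)‖ ≤ ‖Φ‖ * δ * ‖b n‖ := fun n =>
      (Φ.le_opNorm₂ _ _).trans <| mul_le_mul_of_nonneg_right
        (mul_le_mul_of_nonneg_left ((norm_sub_rev _ _).trans_le (hTa n)) (norm_nonneg Φ))
        (norm_nonneg _)
    calc |∑' n, Φ (a n) (b n)| = ‖∑' n, Φ (a n - T (a n)) (b n)‖ := by
          simp only [map_sub, sub_apply]
          rw [Summable.tsum_sub (summable_apply_of_norm_le hM hb Φ)
            (summable_apply_of_norm_le hTa_le hb Φ), hΦT, sub_zero, Real.norm_eq_abs]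
      _ ≤ ∑' n, ‖Φ‖ * δ * ‖b n‖ := tsum_of_norm_bounded (hb.mul_left _).hasSum hbound
      _ = δ * C := by rw [tsum_mul_left]; ring
  have hC : 0 ≤ C := mul_nonneg (norm_nonneg Φ) (tsum_nonneg fun n => norm_nonneg (b n))
  refine abs_nonpos_iff.1 (le_of_forall_pos_le_add fun ε hε => ?_)
  calc |∑' n, Φ (a n) (b n)| ≤ ε / (C + 1) * C := key _ (by positivity)
    _ ≤ 0 + ε := by
      rw [zero_add, div_mul_eq_mul_div, div_le_iff₀ (by positivity)]
      nlinarith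

lemma tsum_apply_eq_zero_of_hasAP (hE : HasAP E) {a : ℕ → E} {b : ℕ → F}
    (hab : Summable fun n => ‖a n‖ * ‖b n‖)
    (h : ∀ (f : StrongDual ℝ E) (g : StrongDual ℝ F), ∑' n, f (a n) * g (b n) = 0)
    (Φ : E →L[ℝ] F →L[ℝ] ℝ) : ∑' n, Φ (a n) (b n) = 0 := by
  obtain ⟨a', b', ha', hb', hab'⟩ := exists_rescaling hab
  simp_rw [← hab']
  refine tsum_apply_eq_zero_of_hasAP_of_tendsto hE ha' hb' (fun f g => ?_) Φ
  have hfg := fun n => hab' (f.smulRight g) n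
  simp only [ContinuousLinearMap.smulRight_apply, smul_apply, smul_eq_mul] at hfg
  simpa [hfg] using h f g

@[simp]
lemma elemTensor_apply (x : E) (y : F) (B : Bil E F) : elemTensor E F x y B = B x y := rfl

lemma elemTensor_mem_ptp (x : E) (y : F) : elemTensor E F x y ∈ ptp E F :=
  Submodule.le_topologicalClosure _ (Submodule.subset_span ⟨x, y, rfl⟩)

-- `ContinuousLinearMap.le_opNorm` does not elaborate against the explicit norm instance on
-- `StrongDual ℝ (Bil E F)` without its implicit arguments spelled out.
lemma abs_apply_le_norm_mul_norm (v : StrongDual ℝ (Bil E F)) (B : Bil E F) :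
    |v B| ≤ ‖v‖ * ‖B‖ :=
  ContinuousLinearMap.le_opNorm (𝕜 := ℝ) (𝕜₂ := ℝ) (σ₁₂ := RingHom.id ℝ) (E := Bil E F) (F := ℝ)
    v B

variable (E F) in
def toBilDual : E ⊗[ℝ] F →ₗ[ℝ] StrongDual ℝ (Bil E F) :=
  TensorProduct.lift <| LinearMap.mk₂ ℝ (elemTensor E F)
    (fun _ _ _ => by ext; simp) (fun _ _ _ => by ext; simp)
    (fun _ _ _ => by ext; simp) (fun _ _ _ => by ext; simp)

@[simp]
lemma toBilDual_tmul (x : E) (y : F) : toBilDual E F (x ⊗ₜ y) = elemTensor E F x y := rfl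

lemma projectiveSeminorm_le_norm_toBilDual (t : E ⊗[ℝ] F) :
    TensorProduct.projectiveSeminorm ℝ E F t ≤ ‖toBilDual E F t‖ := by
  obtain ⟨g, hgt, hg⟩ := (TensorProduct.projectiveSeminorm ℝ E F).exists_dual_vector t
  let B : Bil E F := ((TensorProduct.mk ℝ E F).compr₂ g).mkContinuous₂ 1 fun x y => by
    simpa using (hg (x ⊗ₜ y)).trans (TensorProduct.projectiveSeminorm_tmul_le x y)
  have hB : ‖B‖ ≤ 1 := LinearMap.mkContinuous₂_norm_le _ zero_le_one _
  have hB_eval : ∀ s, toBilDual E F s B = g s := by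
    intro s
    induction s with
    | zero => simp
    | tmul x y => rfl
    | add s s' hs hs' => simp [hs, hs']
  calc TensorProduct.projectiveSeminorm ℝ E F t = toBilDual E F t B := by rw [hB_eval, hgt]
    _ ≤ ‖toBilDual E F t‖ * ‖B‖ := (le_abs_self _).trans (abs_apply_le_norm_mul_norm _ B)
    _ ≤ ‖toBilDual E F t‖ := mul_le_of_le_one_right (norm_nonneg _) hB

def IsTensorSeries {ι : Type*} (w : StrongDual ℝ (Bil E F)) (a : ι → E) (b : ι → F) : Prop :=
  Summable (fun i => ‖a i‖ * ‖b i‖) ∧ ∀ B : Bil E F, HasSum (fun i => B (a i) (b i)) (w B)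

lemma IsTensorSeries.exists_nat {ι : Type*} [Countable ι] {w : StrongDual ℝ (Bil E F)} {a : ι → E}
    {b : ι → F} (h : IsTensorSeries w a b) :
    ∃ (a' : ℕ → E) (b' : ℕ → F), IsTensorSeries w a' b' := by
  obtain ⟨e, he⟩ := Countable.exists_injective_nat ι
  have extend_apply₂ : ∀ Φ : E → F → ℝ, Φ 0 0 = 0 →
      (fun n => Φ (Function.extend e a 0 n) (Function.extend e b 0 n)) =
        Function.extend e (fun i => Φ (a i) (b i)) 0 := by
    intro Φ hΦ
    funext n
    by_cases hn : ∃ i, e i = n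
    · obtain ⟨i, rfl⟩ := hn
      simp [he.extend_apply]
    · simp [Function.extend_apply' _ _ _ hn, hΦ]
  refine ⟨Function.extend e a 0, Function.extend e b 0, ?_, fun B => ?_⟩
  · rw [extend_apply₂ (fun x y => ‖x‖ * ‖y‖) (by simp), summable_extend_zero he]
    exact h.1
  · rw [extend_apply₂ (fun x y => B x y) (by simp), hasSum_extend_zero he]
    exact h.2 B

lemma IsTensorSeries.sigma {κ : Type*} {ι : κ → Type*} {v : κ → StrongDual ℝ (Bil E F)}
    {w : StrongDual ℝ (Bil E F)} {a : ∀ k, ι k → E} {b : ∀ k, ι k → F}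
    (hv : ∀ B : Bil E F, HasSum (fun k => v k B) (w B))
    (hab : ∀ k, IsTensorSeries (v k) (a k) (b k))
    (hcost : Summable fun k => ∑' i, ‖a k i‖ * ‖b k i‖) :
    IsTensorSeries w (fun p : Σ k, ι k => a p.1 p.2) (fun p => b p.1 p.2) := by
  have hsum : Summable fun p : Σ k, ι k => ‖a p.1 p.2‖ * ‖b p.1 p.2‖ :=
    (summable_sigma_of_nonneg fun _ => by positivity).2 ⟨fun k => (hab k).1, hcost⟩
  refine ⟨hsum, fun B => ?_⟩
  have hB : Summable fun p : Σ k, ι k => B (a p.1 p.2) (b p.1 p.2) :=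
    .of_norm_bounded (hsum.mul_left ‖B‖) fun p => by
      simpa only [mul_assoc] using B.le_opNorm₂ _ _
  rw [(hv B).unique (hB.hasSum.sigma fun k => (hab k).2 B)]
  exact hB.hasSum

lemma isTensorSeries_tmulSum (L : List (E × F)) :
    IsTensorSeries (toBilDual E F (TensorProduct.tmulSum ℝ L))
      (fun i : Fin L.length => L[i].1) (fun i => L[i].2) := by
  refine ⟨.of_finite, fun B => ?_⟩
  have hB : toBilDual E F (TensorProduct.tmulSum ℝ L) B = (L.map fun p => B p.1 p.2).sum := by
    induction L with
    | nil => simp [TensorProduct.tmulSum]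
    | cons p L ih => simpa [TensorProduct.tmulSum] using ih
  rw [hB, ← Fin.sum_univ_fun_getElem]
  exact hasSum_fintype _

lemma exists_isTensorSeries_of_mem_span {v : StrongDual ℝ (Bil E F)}
    (hv : v ∈ Submodule.span ℝ {u | ∃ x y, u = elemTensor E F x y}) {ε : ℝ} (hε : 0 < ε) :
    ∃ (n : ℕ) (a : Fin n → E) (b : Fin n → F),
      IsTensorSeries v a b ∧ ∑' i, ‖a i‖ * ‖b i‖ < ‖v‖ + ε := by
  obtain ⟨t, rfl⟩ : v ∈ LinearMap.range (toBilDual E F) :=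
    Submodule.span_le.2 (by rintro _ ⟨x, y, rfl⟩; exact ⟨x ⊗ₜ y, rfl⟩) hv
  obtain ⟨L, rfl, hL⟩ := TensorProduct.exists_projectiveCost_lt
    ((projectiveSeminorm_le_norm_toBilDual t).trans_lt (lt_add_of_pos_right _ hε))
  refine ⟨L.length, _, _, isTensorSeries_tmulSum L, ?_⟩
  rw [tsum_fintype]
  exact (Fin.sum_univ_fun_getElem L fun p : E × F => ‖p.1‖ * ‖p.2‖).trans_lt hL

lemma exists_isTensorSeries_of_mem_ptp {w : StrongDual ℝ (Bil E F)} (hw : w ∈ ptp E F) :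
    ∃ (a : ℕ → E) (b : ℕ → F), IsTensorSeries w a b := by
  set W := Submodule.span ℝ {u | ∃ x y, u = elemTensor E F x y}
  have hw' : w ∈ closure (W.toAddSubgroup : Set (StrongDual ℝ (Bil E F))) := by
    rw [Submodule.coe_toAddSubgroup, ← Submodule.topologicalClosure_coe]
    exact hw
  obtain ⟨v, hv_lim, hv_mem, -, hv_small⟩ := controlled_sum_of_mem_closure hw'
    (b := fun k => (1 / 2 : ℝ) ^ k) (fun k => by positivity)
  choose n a b hab hcost using fun k => exists_isTensorSeries_of_mem_span (hv_mem k)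
    (pow_pos one_half_pos k)
  have hv_norm : Summable fun k => ‖v k‖ :=
    (summable_nat_add_iff 1).1 <|
      ((summable_nat_add_iff 1).2 summable_geometric_two).of_nonneg_of_le
        (fun _ => norm_nonneg _) fun k => (hv_small (k + 1) k.succ_pos).le
  have hv : HasSum v w :=
    (hasSum_iff_tendsto_nat_of_summable_norm hv_norm).2 ((tendsto_add_atTop_iff_nat 1).1 hv_lim)
  have hcost_summable : Summable fun k => ∑' i, ‖a k i‖ * ‖b k i‖ :=
    (hv_norm.add summable_geometric_two).of_nonneg_of_le
      (fun k => tsum_nonneg fun _ => by positivity) fun k => (hcost k).le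
  have hvB : ∀ B : Bil E F, HasSum (fun k => v k B) (w B) := fun B =>
    (ContinuousLinearMap.apply ℝ ℝ B).hasSum hv
  exact (IsTensorSeries.sigma hvB hab hcost_summable).exists_nat

lemma IsTensorSeries.eq_zero_of_hasAP (hAP : HasAP E ∨ HasAP F)
    {w : StrongDual ℝ (Bil E F)} {a : ℕ → E} {b : ℕ → F} (hw : IsTensorSeries w a b)
    (h : ∀ (f : StrongDual ℝ E) (g : StrongDual ℝ F), w (f.smulRight g) = 0) : w = 0 := by
  have hrank_one : ∀ (f : StrongDual ℝ E) (g : StrongDual ℝ F), ∑' n, f (a n) * g (b n) = 0 :=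
    fun f g => by simpa using (hw.2 (f.smulRight g)).tsum_eq.trans (h f g)
  ext B
  rw [← (hw.2 B).tsum_eq]
  rcases hAP with hE | hF
  · exact tsum_apply_eq_zero_of_hasAP hE hw.1 hrank_one B
  · simpa using tsum_apply_eq_zero_of_hasAP hF (a := b) (b := a) (by simpa [mul_comm] using hw.1)
      (fun g f => by simpa [mul_comm] using hrank_one f g) B.flip

end

/-- if `X` or `Y` has the approximation property, `xₙ → x` weakly,
`yₙ → y` weakly and `(xₙ ⊗ yₙ)` converges weakly in `X ⊗̂_π Y`, then
`(xₙ ⊗ yₙ)` converges weakly to `x ⊗ y`. -/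
theorem tensor_sequence_weak_limit (hAP : HasAP X ∨ HasAP Y)
    (x : ℕ → X) (y : ℕ → Y) (x₀ : X) (y₀ : Y)
    (hx : ∀ f : X →L[ℝ] ℝ, Tendsto (fun n => f (x n)) atTop (𝓝 (f x₀)))
    (hy : ∀ g : Y →L[ℝ] ℝ, Tendsto (fun n => g (y n)) atTop (𝓝 (g y₀)))
    (hconv : ∃ u : StrongDual ℝ (Bil X Y), u ∈ ptp X Y ∧
      ∀ B : Bil X Y, Tendsto (fun n => elemTensor X Y (x n) (y n) B) atTop (𝓝 (u B))) :
    ∀ B : Bil X Y, Tendsto (fun n => elemTensor X Y (x n) (y n) B) atTop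
      (𝓝 (elemTensor X Y x₀ y₀ B)) := by
  obtain ⟨u, hu, hlim⟩ := hconv
  have hrank_one : ∀ (f : X →L[ℝ] ℝ) (g : Y →L[ℝ] ℝ),
      (u - elemTensor X Y x₀ y₀) (f.smulRight g) = 0 := fun f g =>
    sub_eq_zero.2 <| tendsto_nhds_unique (hlim _) (by simpa using (hx f).mul (hy g))
  obtain ⟨a, b, hab⟩ := exists_isTensorSeries_of_mem_ptp (sub_mem hu (elemTensor_mem_ptp x₀ y₀))
  rw [← sub_eq_zero.1 (hab.eq_zero_of_hasAP hAP hrank_one)]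
  exact hlim
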